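/- Let G be a simple undirected connected graph with n ≥ 2 vertices and α ∈ [0,1]. Then the α-distance Estrada index satisfies DEE_α(G) ≥ e^{2W(G)/n} + (n−1) + 2αW(G) − 2W(G)/n. -/

import Mathlib

/-! The matrix `D_α(G)` has trace `2αW` and entry sum `2W`, so its quadratic form at the
all-ones vector forces an eigenvalue `σ ≥ 2W/n`. Since `x ↦ eˣ - x` is increasing on `[0, ∞)`,
`e^σ ≥ e^{2W/n} + σ - 2W/n`. Every other eigenvalue satisfies `e^{σ_i} ≥ 1 + σ_i`; summing,
the eigenvalues add up to the trace `2αW`. -/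

open Finset Matrix Polynomial Real

/-- Distance matrix of a graph on `Fin n`: `(i,j)` entry is the graph distance. -/
noncomputable def distMatrix {n : ℕ} (G : SimpleGraph (Fin n)) : Matrix (Fin n) (Fin n) ℝ :=
  fun i j => (G.dist i j : ℝ)

/-- Transmission of a vertex: sum of distances to all other vertices. -/
noncomputable def transmission {n : ℕ} (G : SimpleGraph (Fin n)) (i : Fin n) : ℝ :=
  ∑ j, (G.dist i j : ℝ)

/-- The α-distance matrix `D_α(G) = α·Tr(G) + (1-α)·D(G)`. -/
noncomputable def alphaDistMatrix {n : ℕ} (G : SimpleGraph (Fin n)) (α : ℝ) : Matrix (Fin n) (Fin n) ℝ :=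
  α • Matrix.diagonal (transmission G) + (1 - α) • distMatrix G

/-- Wiener index `W(G) = (1/2)·∑_{i≠j} d(v_i,v_j)`. -/
noncomputable def wiener {n : ℕ} (G : SimpleGraph (Fin n)) : ℝ :=
  (1 / 2) * ∑ i, ∑ j, (G.dist i j : ℝ)

/-- Frobenius norm of a real matrix. -/
noncomputable def frobNorm {n : ℕ} (M : Matrix (Fin n) (Fin n) ℝ) : ℝ :=
  Real.sqrt (∑ i, ∑ j, (M i j) ^ 2)

theorem Real.exp_sub_self_le_exp_sub_self {a b : ℝ} (ha : 0 ≤ a) (hab : a ≤ b) :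
    exp a - a ≤ exp b - b := by
  have hexp : exp a * (b - a + 1) ≤ exp b := by
    simpa [← exp_add] using mul_le_mul_of_nonneg_left (add_one_le_exp (b - a)) (exp_nonneg a)
  nlinarith [one_le_exp ha]

theorem Real.exp_add_sum_sub_le_sum_exp {ι : Type*} [Fintype ι] [DecidableEq ι] (t : ι → ℝ)
    {k : ι} {c : ℝ} (hc : 0 ≤ c) (hck : c ≤ t k) :
    exp c + (Fintype.card ι - 1) + ∑ i, t i - c ≤ ∑ i, exp (t i) := by
  have hk : exp c - c ≤ exp (t k) - t k := exp_sub_self_le_exp_sub_self hc hck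
  have hrest : ∑ i ∈ univ.erase k, (t i + 1) ≤ ∑ i ∈ univ.erase k, exp (t i) :=
    sum_le_sum fun i _ => by linarith [add_one_le_exp (t i)]
  rw [sum_add_distrib, sum_const, card_erase_of_mem (mem_univ k), card_univ, nsmul_one,
    Nat.cast_pred (Fintype.card_pos_iff.2 ⟨k⟩)] at hrest
  rw [← add_sum_erase _ _ (mem_univ k), ← add_sum_erase _ _ (mem_univ k)]
  linarith

theorem Matrix.vecMul_eq_star_mulVec {ι : Type*} [Fintype ι] (M : Matrix ι ι ℝ) (x : ι → ℝ) :
    x ᵥ* M = star M *ᵥ x := by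
  rw [star_eq_conjTranspose, conjTranspose_eq_transpose_of_trivial, mulVec_transpose]

namespace Matrix.IsHermitian

variable {ι : Type*} [Fintype ι] [DecidableEq ι] {A : Matrix ι ι ℝ} (hA : A.IsHermitian)

theorem dotProduct_mulVec_eq_sum_eigenvalues (x : ι → ℝ) :
    x ⬝ᵥ A *ᵥ x =
      ∑ k, hA.eigenvalues k * (star (hA.eigenvectorUnitary : Matrix ι ι ℝ) *ᵥ x) k ^ 2 := by
  conv_lhs => rw [hA.spectral_theorem, Unitary.conjStarAlgAut_apply]
  rw [← mulVec_mulVec, ← mulVec_mulVec, dotProduct_mulVec, vecMul_eq_star_mulVec]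
  simp [dotProduct, mulVec_diagonal, sq, mul_left_comm]

theorem dotProduct_self_eq_sum_sq (x : ι → ℝ) :
    x ⬝ᵥ x = ∑ k, (star (hA.eigenvectorUnitary : Matrix ι ι ℝ) *ᵥ x) k ^ 2 := by
  set U : Matrix ι ι ℝ := ↑hA.eigenvectorUnitary
  calc x ⬝ᵥ x = x ⬝ᵥ (U * star U) *ᵥ x := by
        rw [Unitary.mul_star_self_of_mem hA.eigenvectorUnitary.2, one_mulVec]
    _ = (star U *ᵥ x) ⬝ᵥ (star U *ᵥ x) := by
        rw [← mulVec_mulVec, dotProduct_mulVec, vecMul_eq_star_mulVec]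
    _ = ∑ k, (star U *ᵥ x) k ^ 2 := by simp only [dotProduct, sq]

theorem exists_dotProduct_mulVec_le_eigenvalue_mul [Nonempty ι] (x : ι → ℝ) :
    ∃ k, x ⬝ᵥ A *ᵥ x ≤ hA.eigenvalues k * (x ⬝ᵥ x) := by
  obtain ⟨k, -, hk⟩ := Finset.exists_max_image univ hA.eigenvalues univ_nonempty
  refine ⟨k, ?_⟩
  rw [hA.dotProduct_mulVec_eq_sum_eigenvalues, hA.dotProduct_self_eq_sum_sq, mul_sum]
  exact sum_le_sum fun i _ => mul_le_mul_of_nonneg_right (hk i (mem_univ i)) (sq_nonneg _)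

theorem exists_sum_le_eigenvalue_mul_card [Nonempty ι] :
    ∃ k, ∑ i, ∑ j, A i j ≤ hA.eigenvalues k * Fintype.card ι := by
  simpa [dotProduct, mulVec, sum_comm (γ := ι)] using
    hA.exists_dotProduct_mulVec_le_eigenvalue_mul 1

theorem exp_add_trace_le_sum_exp_eigenvalues [Nonempty ι] (hA₀ : 0 ≤ ∑ i, ∑ j, A i j) :
    Real.exp ((∑ i, ∑ j, A i j) / Fintype.card ι) + ((Fintype.card ι : ℝ) - 1) + A.trace
        - (∑ i, ∑ j, A i j) / Fintype.card ι ≤ ∑ i, Real.exp (hA.eigenvalues i) := by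
  obtain ⟨k, hk⟩ := hA.exists_sum_le_eigenvalue_mul_card
  have hck : (∑ i, ∑ j, A i j) / Fintype.card ι ≤ hA.eigenvalues k :=
    (div_le_iff₀ (Nat.cast_pos.2 Fintype.card_pos)).2 hk
  rw [hA.trace_eq_sum_eigenvalues]
  exact Real.exp_add_sum_sub_le_sum_exp _ (by positivity) hck

end Matrix.IsHermitian

section DistanceMatrix

variable {n : ℕ} (G : SimpleGraph (Fin n))

theorem wiener_nonneg : 0 ≤ wiener G := by
  unfold wiener; positivity

theorem sum_transmission : ∑ i, transmission G i = 2 * wiener G := by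
  simp only [transmission, wiener]; ring

theorem trace_alphaDistMatrix (α : ℝ) : (alphaDistMatrix G α).trace = 2 * α * wiener G := by
  simp only [trace, alphaDistMatrix, diag_apply, Matrix.add_apply, Matrix.smul_apply,
    diagonal_apply_eq, smul_eq_mul, distMatrix, SimpleGraph.dist_self, CharP.cast_eq_zero,
    mul_zero, add_zero, ← mul_sum, sum_transmission]
  ring

theorem sum_alphaDistMatrix_apply (α : ℝ) (i : Fin n) :
    ∑ j, alphaDistMatrix G α i j = transmission G i := by
  simp only [alphaDistMatrix, Matrix.add_apply, Matrix.smul_apply, diagonal_apply, transmission,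
    smul_eq_mul, mul_ite, mul_zero, distMatrix, sum_add_distrib, sum_ite_eq, mem_univ,
    ↓reduceIte, ← mul_sum]
  ring

theorem sum_alphaDistMatrix (α : ℝ) : ∑ i, ∑ j, alphaDistMatrix G α i j = 2 * wiener G := by
  simp only [sum_alphaDistMatrix_apply, sum_transmission]

end DistanceMatrix

theorem stmt_16_general {n : ℕ} (hn : 2 ≤ n) (G : SimpleGraph (Fin n))
    (α : ℝ)
    (hA : (alphaDistMatrix G α).IsHermitian) :
    Real.exp (2 * wiener G / n) + ((n : ℝ) - 1) + 2 * α * wiener G - 2 * wiener G / n ≤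
      ∑ i, Real.exp (hA.eigenvalues i) := by
  have : Nonempty (Fin n) := ⟨⟨0, by omega⟩⟩
  have h := hA.exp_add_trace_le_sum_exp_eigenvalues
    (by rw [sum_alphaDistMatrix]; linarith [wiener_nonneg G])
  rwa [sum_alphaDistMatrix, trace_alphaDistMatrix, Fintype.card_fin] at h

theorem stmt_16 {n : ℕ} (hn : 2 ≤ n) (G : SimpleGraph (Fin n)) (hG : G.Connected)
    (α : ℝ) (hα : α ∈ Set.Icc (0 : ℝ) 1)
    (hA : (alphaDistMatrix G α).IsHermitian) :
    Real.exp (2 * wiener G / n) + ((n : ℝ) - 1) + 2 * α * wiener G - 2 * wiener G / n ≤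
      ∑ i, Real.exp (hA.eigenvalues i) :=
  stmt_16_general hn G α hA
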